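/- arXiv:1403.4453 — 2 statements merged into one kernel-verified Lean document; each statement's English description precedes it below -/
import Mathlib

section
/- Let F : ℝ × ℝ → ℝ be given by F(λ, x) = (α − m̃(λ))(β − m̂(λ)) − x, where m̃, m̂ : ℝ → ℝ are twice differentiable, α, β ∈ ℝ, m̂(λ₀) = β, and (m̃(λ₀) − α)·m̂'(λ₀) ≠ 0. If λ(·) is a C² function near 0 with λ(0) = λ₀ and F(λ(x), x) = 0, then λ'(0) = 1/((m̃(λ₀) − α)·m̂'(λ₀)) and λ''(0) = 2·(1/((m̃(λ₀) − α)m̂'(λ₀))²)·( m̃'(λ₀)/(α − m̃(λ₀)) − (1/2)·m̂''(λ₀)/m̂'(λ₀) ). -/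
/-!
Put `g t = (m̃ t - α) * (m̂ t - β)`; the equation says `g ∘ λ = id` near `0`. Differentiating once
and twice gives `g'(λ₀) λ'(0) = 1` and `g''(λ₀) λ'(0)² + g'(λ₀) λ''(0) = 0`, and since
`m̂ λ₀ = β` the Leibniz rule reduces `g'(λ₀)` to `(m̃ λ₀ - α) m̂'(λ₀)` and `g''(λ₀)` to
`2 m̃'(λ₀) m̂'(λ₀) + (m̃ λ₀ - α) m̂''(λ₀)`.
-/

open Set Filter Topology

section SecondDerivative

variable {𝕜 : Type*} [NontriviallyNormedField 𝕜] {f g u v : 𝕜 → 𝕜} {x : 𝕜}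

theorem hasDerivAt_deriv_comp (hf : ContDiff 𝕜 2 f) (hg : ContDiffAt 𝕜 2 g x) :
    HasDerivAt (deriv (f ∘ g))
      (deriv (deriv f) (g x) * deriv g x ^ 2 + deriv f (g x) * deriv (deriv g) x) x := by
  have hg₁ : ∀ᶠ y in 𝓝 x, DifferentiableAt 𝕜 g y :=
    (hg.eventually (by simp)).mono fun y hy => hy.differentiableAt (by simp)
  have hg₂ : DifferentiableAt 𝕜 (deriv g) x :=
    (hg.derivWithin (m := 1) (by norm_num)).differentiableAt (by simp)
  have hderiv : deriv (f ∘ g) =ᶠ[𝓝 x] fun y => deriv f (g y) * deriv g y :=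
    hg₁.mono fun y hy => deriv_comp y (hf.differentiable (by simp) _) hy
  refine ((((hf.differentiable_deriv_two _).hasDerivAt.comp x
    hg₁.self_of_nhds.hasDerivAt).mul hg₂.hasDerivAt).congr_of_eventuallyEq hderiv).congr_deriv ?_
  rw [Function.comp_apply]
  ring

theorem deriv_mul_deriv_eq_one_of_comp_eventuallyEq_id (hf : Differentiable 𝕜 f)
    (hg : DifferentiableAt 𝕜 g x) (hfg : f ∘ g =ᶠ[𝓝 x] id) :
    deriv f (g x) * deriv g x = 1 := by
  rw [← deriv_comp x (hf _) hg, hfg.deriv_eq, deriv_id]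

theorem deriv_deriv_comp_eq_zero_of_comp_eventuallyEq_id (hf : ContDiff 𝕜 2 f)
    (hg : ContDiffAt 𝕜 2 g x) (hfg : f ∘ g =ᶠ[𝓝 x] id) :
    deriv (deriv f) (g x) * deriv g x ^ 2 + deriv f (g x) * deriv (deriv g) x = 0 := by
  have hconst : deriv (f ∘ g) =ᶠ[𝓝 x] fun _ => 1 := hfg.deriv.trans (by simp)
  exact (hasDerivAt_deriv_comp hf hg).unique ((hasDerivAt_const x 1).congr_of_eventuallyEq hconst)

theorem deriv_deriv_mul (hu : ContDiff 𝕜 2 u) (hv : ContDiff 𝕜 2 v) (t : 𝕜) :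
    deriv (deriv (u * v)) t =
      deriv (deriv u) t * v t + 2 * deriv u t * deriv v t + u t * deriv (deriv v) t := by
  have hu₁ := hu.differentiable (by simp)
  have hv₁ := hv.differentiable (by simp)
  have hleibniz : deriv (u * v) = deriv u * v + u * deriv v :=
    funext fun y => deriv_mul (hu₁ y) (hv₁ y)
  rw [hleibniz]
  refine ((((hu.differentiable_deriv_two t).hasDerivAt.mul (hv₁ t).hasDerivAt).add
    ((hu₁ t).hasDerivAt.mul (hv.differentiable_deriv_two t).hasDerivAt)).deriv).trans ?_
  ring

end SecondDerivative

/-- First and second order coefficients of the implicitly defined eigenvalue branch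
for F(λ, x) = (α − m̃(λ))(β − m̂(λ)) − x in the case d = 1. -/
theorem branch_coefficients (mt mh : ℝ → ℝ) (α β lam₀ : ℝ)
    (hmt : ContDiff ℝ 2 mt) (hmh : ContDiff ℝ 2 mh)
    (hβ : mh lam₀ = β)
    (hne : (mt lam₀ - α) * deriv mh lam₀ ≠ 0)
    (ε : ℝ) (hε : 0 < ε) (lam : ℝ → ℝ)
    (hlam : ContDiffOn ℝ 2 lam (Ioo (-ε) ε))
    (hlam0 : lam 0 = lam₀)
    (hsol : ∀ x ∈ Ioo (-ε) ε, (α - mt (lam x)) * (β - mh (lam x)) - x = 0) :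
    deriv lam 0 = 1 / ((mt lam₀ - α) * deriv mh lam₀) ∧
    deriv (deriv lam) 0 =
      2 * (1 / ((mt lam₀ - α) * deriv mh lam₀)) ^ 2 *
        (deriv mt lam₀ / (α - mt lam₀)
          - (1 / 2) * deriv (deriv mh) lam₀ / deriv mh lam₀) := by
  set u : ℝ → ℝ := fun t => mt t - α
  set v : ℝ → ℝ := fun t => mh t - β
  have hu : ContDiff ℝ 2 u := hmt.sub contDiff_const
  have hv : ContDiff ℝ 2 v := hmh.sub contDiff_const
  have hnhds : Ioo (-ε) ε ∈ 𝓝 (0 : ℝ) := Ioo_mem_nhds (by linarith) hε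
  have hlam₀ : ContDiffAt ℝ 2 lam 0 := hlam.contDiffAt hnhds
  have hid : (u * v) ∘ lam =ᶠ[𝓝 0] id := eventually_of_mem hnhds fun x hx => by
    change (mt (lam x) - α) * (mh (lam x) - β) = x
    linear_combination hsol x hx
  have hderiv₁ : deriv (u * v) lam₀ = (mt lam₀ - α) * deriv mh lam₀ := by
    rw [deriv_mul (hu.differentiable (by simp) lam₀) (hv.differentiable (by simp) lam₀)]
    simp [u, v, deriv_sub_const, hβ]
  have hderiv₂ : deriv (deriv (u * v)) lam₀ =
      2 * deriv mt lam₀ * deriv mh lam₀ + (mt lam₀ - α) * deriv (deriv mh) lam₀ := by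
    rw [deriv_deriv_mul hu hv]
    simp [u, v, deriv_sub_const_fun, hβ]
  have h₁ := deriv_mul_deriv_eq_one_of_comp_eventuallyEq_id (f := u * v)
    ((hu.mul hv).differentiable (by simp)) (hlam₀.differentiableAt (by simp)) hid
  have h₂ := deriv_deriv_comp_eq_zero_of_comp_eventuallyEq_id (f := u * v) (hu.mul hv) hlam₀ hid
  rw [hlam0, hderiv₁] at h₁
  rw [hlam0, hderiv₁, hderiv₂] at h₂
  have hA : mt lam₀ - α ≠ 0 := left_ne_zero_of_mul hne
  have hB : deriv mh lam₀ ≠ 0 := right_ne_zero_of_mul hne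
  have hA' : α - mt lam₀ ≠ 0 := sub_ne_zero.mpr (sub_ne_zero.mp hA).symm
  have ha : deriv lam 0 = 1 / ((mt lam₀ - α) * deriv mh lam₀) := by
    field_simp; linear_combination h₁
  refine ⟨ha, ?_⟩
  rw [ha] at h₂
  field_simp at h₂ ⊢
  linear_combination -h₂
end

section
/- Let Q be a Hermitian d×d matrix and λ₀ real with Q − λ₀·I positive definite. Then the function λ ↦ −√(Q − λ·I) is differentiable at λ₀ with derivative (1/2)·(Q − λ₀·I)^{−1/2}. -/
/-!
Write `A = Q - λ₀ • 1 = U diag(μ) U*` with all `μ k > 0`. For `λ` near `λ₀` the matrix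
`Q - λ • 1 = A - (λ - λ₀) • 1` is still positive semidefinite, with square root
`U diag(√(μ k - (λ - λ₀))) U*`, so each entry of `M λ` is a fixed linear combination of the scalar
functions `λ ↦ -√(μ k - (λ - λ₀))`. Their derivatives at `λ₀` are `1 / (2 √(μ k))`, and the same
combination of these is the corresponding entry of `(1/2) (√A)⁻¹ = U diag(1 / (2 √μ)) U*`.
-/

open Matrix ComplexOrder

noncomputable def Matrix.PosSemidef.sqrt {n 𝕜 : Type*} [Fintype n] [DecidableEq n] [RCLike 𝕜]
    {A : Matrix n n 𝕜} (hA : A.PosSemidef) : Matrix n n 𝕜 :=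
  hA.1.eigenvectorUnitary.1 * diagonal ((↑) ∘ (√·) ∘ hA.1.eigenvalues) *
    (star hA.1.eigenvectorUnitary : Matrix n n 𝕜)

open Filter Topology
open scoped MatrixOrder

namespace Matrix

variable {n 𝕜 : Type*} [Fintype n] [DecidableEq n] [RCLike 𝕜] {A : Matrix n n 𝕜}

namespace IsHermitian

variable (hA : A.IsHermitian)
include hA

lemma cfc_apply (f : ℝ → ℝ) (i j : n) :
    hA.cfc f i j = ∑ k, f (hA.eigenvalues k) • ((hA.eigenvectorUnitary : Matrix n n 𝕜) i k *
      star ((hA.eigenvectorUnitary : Matrix n n 𝕜) j k)) := by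
  rw [IsHermitian.cfc, Unitary.conjStarAlgAut_apply, mul_apply]
  simp only [mul_diagonal, star_apply, Function.comp_apply, RCLike.real_smul_eq_coe_mul]
  exact Finset.sum_congr rfl fun k _ ↦ by ring

lemma hasDerivAt_cfc_apply {f : ℝ → ℝ → ℝ} {f' : ℝ → ℝ} {t₀ : ℝ}
    (hf : ∀ k, HasDerivAt (fun t ↦ f t (hA.eigenvalues k)) (f' (hA.eigenvalues k)) t₀) (i j : n) :
    HasDerivAt (fun t ↦ hA.cfc (f t) i j) (hA.cfc f' i j) t₀ := by
  simp only [hA.cfc_apply]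
  exact HasDerivAt.fun_sum fun k _ ↦ (hf k).smul_const _

lemma sub_smul_one_eq_cfc (t : ℝ) : A - (t : 𝕜) • 1 = hA.cfc (· - t) := by
  rw [← hA.cfc_eq, cfc_sub _ _ A, cfc_id' ℝ A, cfc_const t A, Algebra.algebraMap_eq_smul_one,
    RCLike.real_smul_eq_coe_smul (K := 𝕜)]

lemma cfc_neg (f : ℝ → ℝ) : hA.cfc (fun x ↦ -f x) = -hA.cfc f := by
  rw [← hA.cfc_eq, ← hA.cfc_eq, _root_.cfc_neg]

lemma cfc_const_mul (r : ℝ) (f : ℝ → ℝ) : hA.cfc (fun x ↦ r * f x) = (r : 𝕜) • hA.cfc f := by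
  rw [← hA.cfc_eq, ← hA.cfc_eq, _root_.cfc_const_mul r f A (A.finite_real_spectrum.continuousOn f),
    RCLike.real_smul_eq_coe_smul (K := 𝕜)]

lemma posSemidef_cfc {f : ℝ → ℝ} (hf : ∀ k, 0 ≤ f (hA.eigenvalues k)) : (hA.cfc f).PosSemidef := by
  rw [← hA.cfc_eq, ← nonneg_iff_posSemidef]
  refine cfc_nonneg fun x hx ↦ ?_
  obtain ⟨k, rfl⟩ := hA.spectrum_real_eq_range_eigenvalues ▸ hx
  exact hf k

end IsHermitian

lemma PosSemidef.sqrt_eq_cfc (hA : A.PosSemidef) : hA.sqrt = hA.1.cfc Real.sqrt := rfl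

lemma PosSemidef.sqrt_sub_smul_one_eq_cfc (hA : A.IsHermitian) (t : ℝ)
    (h : (A - (t : 𝕜) • 1).PosSemidef) :
    h.sqrt = hA.cfc (fun x ↦ √(x - t)) := by
  rw [h.sqrt_eq_cfc, ← h.1.cfc_eq, hA.sub_smul_one_eq_cfc, ← hA.cfc_eq, ← hA.cfc_eq,
    ← cfc_comp' Real.sqrt (· - t) A]

lemma PosDef.inv_sqrt_eq_cfc (hA : A.PosDef) :
    hA.posSemidef.sqrt⁻¹ = hA.1.cfc (fun x ↦ (√x)⁻¹) := by
  refine inv_eq_right_inv ?_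
  rw [PosSemidef.sqrt_eq_cfc, ← hA.1.cfc_eq, ← hA.1.cfc_eq,
    ← cfc_mul _ _ A (A.finite_real_spectrum.continuousOn _) (A.finite_real_spectrum.continuousOn _)]
  refine (cfc_congr fun x hx ↦ ?_).trans (cfc_const_one ℝ A)
  obtain ⟨k, rfl⟩ := hA.1.spectrum_real_eq_range_eigenvalues ▸ hx
  exact mul_inv_cancel₀ (Real.sqrt_pos.2 (hA.eigenvalues_pos k)).ne'

lemma PosDef.eventually_posSemidef_sub_smul_one (hA : A.PosDef) :
    ∀ᶠ t : ℝ in 𝓝 0, (A - (t : 𝕜) • 1).PosSemidef := by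
  have hlt : ∀ᶠ t in 𝓝 (0 : ℝ), ∀ k, t < hA.1.eigenvalues k :=
    eventually_all.2 fun k ↦ eventually_lt_nhds (hA.eigenvalues_pos k)
  filter_upwards [hlt] with t ht
  rw [hA.1.sub_smul_one_eq_cfc]
  exact hA.1.posSemidef_cfc fun k ↦ sub_nonneg.2 (ht k).le

end Matrix

lemma hasDerivAt_neg_sqrt_sub_sub {x : ℝ} (hx : 0 < x) (t₀ : ℝ) :
    HasDerivAt (fun t ↦ -√(x - (t - t₀))) (2⁻¹ * (√x)⁻¹) t₀ := by
  have hinner : HasDerivAt (fun t ↦ x - (t - t₀)) (-1) t₀ := by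
    simpa using ((hasDerivAt_id t₀).sub_const t₀).const_sub x
  refine (hinner.sqrt (by simpa using hx.ne')).neg.congr_deriv ?_
  simp only [sub_self, sub_zero]
  ring

/-- If Q − λ₀·I is positive definite, the matrix function λ ↦ −√(Q − λ·I)
(defined via the positive semidefinite square root wherever it exists) is
differentiable at λ₀ with (entrywise) derivative (1/2)·(Q − λ₀·I)^{−1/2}. -/
theorem deriv_neg_sqrt (d : ℕ) (Q : Matrix (Fin d) (Fin d) ℂ)
    (lam₀ : ℝ)
    (hpd : (Q - (lam₀ : ℂ) • (1 : Matrix (Fin d) (Fin d) ℂ)).PosDef)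
    (M : ℝ → Matrix (Fin d) (Fin d) ℂ)
    (hM : ∀ (lam : ℝ) (h : (Q - (lam : ℂ) • (1 : Matrix (Fin d) (Fin d) ℂ)).PosSemidef),
      M lam = -h.sqrt) :
    ∀ i j, HasDerivAt (fun lam => M lam i j)
      (((1 / 2 : ℂ) • (hpd.posSemidef.sqrt)⁻¹) i j) lam₀ := by
  intro i j
  have hshift (lam : ℝ) : Q - (lam : ℂ) • 1 = Q - (lam₀ : ℂ) • 1 - ((lam - lam₀ : ℝ) : ℂ) • 1 := by
    push_cast
    rw [sub_smul]
    abel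
  have hM_eq : (fun lam ↦ M lam i j) =ᶠ[𝓝 lam₀]
      fun lam ↦ hpd.1.cfc (fun x ↦ -√(x - (lam - lam₀))) i j := by
    have hsub : Tendsto (· - lam₀) (𝓝 lam₀) (𝓝 0) := tendsto_sub_nhds_zero_iff.2 tendsto_id
    filter_upwards [hsub.eventually hpd.eventually_posSemidef_sub_smul_one] with lam hlam
    have hM_lam := hM lam
    rw [hshift] at hM_lam
    rw [hM_lam hlam, hlam.sqrt_sub_smul_one_eq_cfc hpd.1, hpd.1.cfc_neg]
  have hderiv := hpd.1.hasDerivAt_cfc_apply (f := fun t x ↦ -√(x - (t - lam₀)))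
    (f' := fun x ↦ 2⁻¹ * (√x)⁻¹)
    (fun k ↦ hasDerivAt_neg_sqrt_sub_sub (hpd.eigenvalues_pos k) lam₀) i j
  refine (hderiv.congr_of_eventuallyEq hM_eq).congr_deriv ?_
  rw [hpd.1.cfc_const_mul, hpd.inv_sqrt_eq_cfc, Matrix.smul_apply, Matrix.smul_apply]
  norm_num
end
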